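/- arXiv:1407.4505 — 3 statements merged into one kernel-verified Lean document; each statement's English description precedes it below -/
import Mathlib

section
/- Let $S$ be the Sobolev constant of $\Omega$ and assume $S > 0$. Let $\Lambda > 0$ and $0 \le \lambda < \Lambda$. Then there exists $r > 0$ such that for every $u \in C_c^\infty(\Omega)$ with $\|\nabla u\|_p^p = 1$ and $\|u\|_p^p \le 1/\Lambda$, one has $\Phi_\lambda(r u) > 0$. -/
open MeasureTheory

noncomputable section

/-- `u` is a smooth compactly supported test function with support in `Ω`. -/
def TestFun {N : ℕ} (Ω : Set (EuclideanSpace ℝ (Fin N)))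
    (u : EuclideanSpace ℝ (Fin N) → ℝ) : Prop :=
  ContDiff ℝ (⊤ : ℕ∞) u ∧ HasCompactSupport u ∧ tsupport u ⊆ Ω

/-- `‖∇u‖_p^p = ∫_Ω |∇u|^p`. -/
noncomputable def gradLp {N : ℕ} (Ω : Set (EuclideanSpace ℝ (Fin N))) (p : ℝ)
    (u : EuclideanSpace ℝ (Fin N) → ℝ) : ℝ :=
  ∫ x in Ω, ‖fderiv ℝ u x‖ ^ p

/-- `‖u‖_q^q = ∫_Ω |u|^q`. -/
noncomputable def funLq {N : ℕ} (Ω : Set (EuclideanSpace ℝ (Fin N))) (q : ℝ)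
    (u : EuclideanSpace ℝ (Fin N) → ℝ) : ℝ :=
  ∫ x in Ω, |u x| ^ q

/-- The energy functional `Φ_λ(u) = (1/p)‖∇u‖_p^p - (λ/p)‖u‖_p^p - (1/p*)‖u‖_{p*}^{p*}`. -/
noncomputable def Phi {N : ℕ} (Ω : Set (EuclideanSpace ℝ (Fin N))) (p pstar lam : ℝ)
    (u : EuclideanSpace ℝ (Fin N) → ℝ) : ℝ :=
  (1 / p) * gradLp Ω p u - (lam / p) * funLq Ω p u - (1 / pstar) * funLq Ω pstar u

/-- The Sobolev constant `S = inf { ‖∇u‖_p^p / ‖u‖_{p*}^p }`, where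
`‖u‖_{p*}^p = (∫_Ω |u|^{p*})^{p/p*}`. -/
noncomputable def sobolevS {N : ℕ} (Ω : Set (EuclideanSpace ℝ (Fin N))) (p pstar : ℝ) : ℝ :=
  sInf { c : ℝ | ∃ u : EuclideanSpace ℝ (Fin N) → ℝ,
    TestFun Ω u ∧ u ≠ 0 ∧ c = gradLp Ω p u / (funLq Ω pstar u) ^ (p / pstar) }

lemma funLq_smul {N : ℕ} (Ω : Set (EuclideanSpace ℝ (Fin N))) (q r : ℝ)
    (hr : 0 < r) (u : EuclideanSpace ℝ (Fin N) → ℝ) :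
    funLq Ω q (fun x => r * u x) = r ^ q * funLq Ω q u := by
  unfold funLq
  rw [← integral_const_mul]
  congr 1
  ext x
  rw [abs_mul, abs_of_pos hr, Real.mul_rpow hr.le (abs_nonneg _)]

lemma gradLp_smul {N : ℕ} (Ω : Set (EuclideanSpace ℝ (Fin N))) (q r : ℝ)
    (hr : 0 < r) (u : EuclideanSpace ℝ (Fin N) → ℝ) (hu : Differentiable ℝ u) :
    gradLp Ω q (fun x => r * u x) = r ^ q * gradLp Ω q u := by
  unfold gradLp
  rw [← integral_const_mul]
  congr 1
  ext x
  rw [fderiv_const_mul (hu x) r, norm_smul, Real.norm_eq_abs, abs_of_pos hr,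
    Real.mul_rpow hr.le (norm_nonneg _)]

/-- for `0 ≤ λ < Λ` there is `r > 0` with `Φ_λ(ru) > 0` on the set `B₀`. -/
theorem statement_2 (N : ℕ) (hN : 2 ≤ N) (Ω : Set (EuclideanSpace ℝ (Fin N)))
    (hΩo : IsOpen Ω) (hΩne : Ω.Nonempty) (hΩb : Bornology.IsBounded Ω)
    (p : ℝ) (hp1 : 1 < p) (hpN : p < N)
    (pstar : ℝ) (hps : pstar = N * p / (N - p))
    (S : ℝ) (hS : S = sobolevS Ω p pstar) (hSpos : 0 < S)
    (Λ lam : ℝ) (hΛ : 0 < Λ) (hlam0 : 0 ≤ lam) (hlam : lam < Λ) :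
    ∃ r : ℝ, 0 < r ∧
      ∀ u : EuclideanSpace ℝ (Fin N) → ℝ, TestFun Ω u →
        gradLp Ω p u = 1 → funLq Ω p u ≤ 1 / Λ →
        0 < Phi Ω p pstar lam (fun x => r * u x) := by
  have hp0 : 0 < p := lt_trans one_pos hp1
  have hNp : (0:ℝ) < N - p := by linarith
  have hpps : p < pstar := by
    rw [hps, lt_div_iff₀ hNp]
    nlinarith
  have hps0 : 0 < pstar := lt_trans hp0 hpps
  set C : ℝ := (1 / S) ^ (pstar / p) with hC
  have hCpos : 0 < C := Real.rpow_pos_of_pos (by positivity) _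
  set ε : ℝ := (1 - lam / Λ) / p with hε
  have hεpos : 0 < ε := by
    apply div_pos _ hp0
    have : lam / Λ < 1 := (div_lt_one hΛ).2 hlam
    linarith
  set r : ℝ := (ε * pstar / (2 * C)) ^ (1 / (pstar - p)) with hr
  have hXpos : 0 < ε * pstar / (2 * C) := by positivity
  have hrpos : 0 < r := Real.rpow_pos_of_pos hXpos _
  refine ⟨r, hrpos, ?_⟩
  intro u hu hgrad hA
  have hune : u ≠ 0 := by
    intro h0
    rw [h0] at hgrad
    simp only [gradLp, Pi.zero_def] at hgrad
    rw [show (fderiv ℝ (fun _ : EuclideanSpace ℝ (Fin N) => (0:ℝ))) = fun _ => 0 by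
      ext x; simp] at hgrad
    simp [Real.zero_rpow (ne_of_gt hp0)] at hgrad
  set B : ℝ := funLq Ω pstar u with hB
  have hBnn : 0 ≤ B := integral_nonneg fun x => Real.rpow_nonneg (abs_nonneg _) _
  -- Sobolev bound : B ≤ C
  have hBC : B ≤ C := by
    rcases eq_or_lt_of_le hBnn with h | hBpos
    · linarith
    · have hmem : (1 : ℝ) / B ^ (p / pstar) ∈
          { c : ℝ | ∃ v : EuclideanSpace ℝ (Fin N) → ℝ,
            TestFun Ω v ∧ v ≠ 0 ∧ c = gradLp Ω p v / (funLq Ω pstar v) ^ (p / pstar) } := by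
        exact ⟨u, hu, hune, by rw [hgrad, ← hB]⟩
      have hbdd : BddBelow { c : ℝ | ∃ v : EuclideanSpace ℝ (Fin N) → ℝ,
            TestFun Ω v ∧ v ≠ 0 ∧ c = gradLp Ω p v / (funLq Ω pstar v) ^ (p / pstar) } := by
        by_contra hnb
        rw [hS, sobolevS, Real.sInf_of_not_bddBelow hnb] at hSpos
        exact lt_irrefl 0 hSpos
      have hSle : S ≤ 1 / B ^ (p / pstar) := by
        rw [hS, sobolevS]; exact csInf_le hbdd hmem
      have hBp : 0 < B ^ (p / pstar) := Real.rpow_pos_of_pos hBpos _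
      have h1 : B ^ (p / pstar) ≤ 1 / S := by
        rw [le_div_iff₀ hSpos]
        calc B ^ (p / pstar) * S ≤ B ^ (p / pstar) * (1 / B ^ (p / pstar)) := by
              exact mul_le_mul_of_nonneg_left hSle hBp.le
          _ = 1 := by field_simp
      calc B = (B ^ (p / pstar)) ^ (pstar / p) := by
            have he : p / pstar * (pstar / p) = 1 := by field_simp
            rw [← Real.rpow_mul hBnn, he, Real.rpow_one]
        _ ≤ (1 / S) ^ (pstar / p) :=
            Real.rpow_le_rpow hBp.le h1 (by positivity)
  -- scaling
  have hdiff : Differentiable ℝ u := hu.1.differentiable (by simp)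
  have hscaleG : gradLp Ω p (fun x => r * u x) = r ^ p := by
    rw [gradLp_smul Ω p r hrpos u hdiff, hgrad, mul_one]
  have hscaleA : funLq Ω p (fun x => r * u x) = r ^ p * funLq Ω p u :=
    funLq_smul Ω p r hrpos u
  have hscaleB : funLq Ω pstar (fun x => r * u x) = r ^ pstar * B :=
    funLq_smul Ω pstar r hrpos u
  have hrps : r ^ pstar = r ^ p * (ε * pstar / (2 * C)) := by
    have h1 : r ^ (pstar - p) = ε * pstar / (2 * C) := by
      rw [hr, ← Real.rpow_mul hXpos.le, one_div_mul_cancel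
        (by intro h; linarith [sub_eq_zero.mp h] : pstar - p ≠ 0), Real.rpow_one]
    rw [← h1, ← Real.rpow_add hrpos]
    ring_nf
  have hrp : 0 < r ^ p := Real.rpow_pos_of_pos hrpos _
  rw [Phi, hscaleG, hscaleA, hscaleB, hrps]
  have hterm2 : (lam / p) * (r ^ p * funLq Ω p u) ≤ (lam / p) * (r ^ p * (1 / Λ)) := by
    apply mul_le_mul_of_nonneg_left _ (by positivity)
    exact mul_le_mul_of_nonneg_left hA hrp.le
  have hterm3 : (1 / pstar) * (r ^ p * (ε * pstar / (2 * C)) * B)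
      ≤ r ^ p * (ε / 2) := by
    have : (1 / pstar) * (r ^ p * (ε * pstar / (2 * C)) * B)
        ≤ (1 / pstar) * (r ^ p * (ε * pstar / (2 * C)) * C) := by
      apply mul_le_mul_of_nonneg_left _ (by positivity)
      exact mul_le_mul_of_nonneg_left hBC (by positivity)
    calc (1 / pstar) * (r ^ p * (ε * pstar / (2 * C)) * B)
        ≤ (1 / pstar) * (r ^ p * (ε * pstar / (2 * C)) * C) := this
      _ = r ^ p * (ε / 2) := by field_simp
  have hkey : (1 / p) * r ^ p - (lam / p) * (r ^ p * (1 / Λ)) = r ^ p * ε := by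
    rw [hε]; field_simp
  nlinarith [hrp, hεpos, mul_pos hrp hεpos]
end
end

section
/- Let $\Lambda > 0$ and $\lambda < \Lambda$. Then every $u \in C_c^\infty(\Omega)$ satisfying $\|\nabla u\|_p^p \le \Lambda \, \|u\|_p^p$ obeys the estimate $\Phi_\lambda(u) \le \frac{|\Omega|}{N} \, (\Lambda - \lambda)^{N/p}$. -/
open MeasureTheory

noncomputable section

/-- `Φ_λ(u) ≤ (|Ω|/N)(Λ - λ)^{N/p}` when `‖∇u‖_p^p ≤ Λ ‖u‖_p^p`. -/
theorem statement_6 (N : ℕ) (hN : 2 ≤ N) (Ω : Set (EuclideanSpace ℝ (Fin N)))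
    (hΩo : IsOpen Ω) (hΩne : Ω.Nonempty) (hΩb : Bornology.IsBounded Ω)
    (p : ℝ) (hp1 : 1 < p) (hpN : p < N)
    (pstar : ℝ) (hps : pstar = N * p / (N - p))
    (Λ lam : ℝ) (hΛ : 0 < Λ) (hlam : lam < Λ) :
    ∀ u : EuclideanSpace ℝ (Fin N) → ℝ, TestFun Ω u →
      gradLp Ω p u ≤ Λ * funLq Ω p u →
      Phi Ω p pstar lam u ≤ (volume Ω).toReal / N * (Λ - lam) ^ ((N : ℝ) / p) := by
  intro u hu hgrad
  have hN0 : (0:ℝ) < N := by positivity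
  have hp0 : (0:ℝ) < p := zero_lt_one.trans hp1
  have hNp : (0:ℝ) < (N:ℝ) - p := sub_pos.2 hpN
  have hps0 : 0 < pstar := by rw [hps]; positivity
  set a : ℝ := Λ - lam with ha_def
  have ha : 0 < a := sub_pos.2 hlam
  -- pointwise Young inequality
  have key : ∀ t : ℝ, 0 ≤ t →
      (a / p) * t ^ p - (1 / pstar) * t ^ pstar ≤ a ^ ((N:ℝ) / p) / N := by
    intro t ht
    have hconj : ((N:ℝ)/p).HolderConjugate ((N:ℝ)/((N:ℝ)-p)) := by
      rw [Real.holderConjugate_iff]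
      constructor
      · rw [lt_div_iff₀ hp0]; linarith
      · field_simp; ring
    have hY := Real.young_inequality_of_nonneg ha.le (Real.rpow_nonneg ht p) hconj
    have hps2 : (t ^ p) ^ ((N:ℝ)/((N:ℝ)-p)) = t ^ pstar := by
      rw [← Real.rpow_mul ht, hps]
      congr 1
      field_simp
    rw [hps2] at hY
    have hB : 0 ≤ t ^ pstar := Real.rpow_nonneg ht pstar
    have hC : 0 ≤ a ^ ((N:ℝ)/p) := Real.rpow_nonneg ha.le _
    have h1 : a ^ ((N:ℝ)/p) / ((N:ℝ)/p) = a ^ ((N:ℝ)/p) * p / N := by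
      rw [div_div_eq_mul_div]
    have h2 : t ^ pstar / ((N:ℝ)/((N:ℝ)-p)) = t ^ pstar * (((N:ℝ)-p)/N) := by
      field_simp
    rw [h1, h2] at hY
    have hsp : p / pstar = ((N:ℝ)-p)/N := by
      rw [hps]; field_simp
    rw [sub_le_iff_le_add, div_mul_eq_mul_div, div_le_iff₀ hp0]
    calc a * t ^ p ≤ a ^ ((N:ℝ)/p) * p / N + t ^ pstar * (((N:ℝ)-p)/N) := hY
      _ = a ^ ((N:ℝ)/p) / N * p + t ^ pstar * (p / pstar) := by rw [hsp]; ring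
      _ = (a ^ ((N:ℝ)/p) / N + 1 / pstar * t ^ pstar) * p := by ring
  -- integrability
  have hcont : Continuous u := hu.1.continuous
  have hint : ∀ q : ℝ, 0 < q → Integrable (fun x => |u x| ^ q) volume := by
    intro q hq
    apply Continuous.integrable_of_hasCompactSupport
    · exact (continuous_abs.comp hcont).rpow_const (fun x => Or.inr hq.le)
    · exact hu.2.1.comp_left (g := fun t : ℝ => |t| ^ q)
        (by simp [Real.zero_rpow hq.ne'])
  have hintp := ((hint p hp0).sub (hint pstar hps0) |>.const_mul 1).integrableOn (s := Ω)
  have hμ : volume Ω < ⊤ := hΩb.measure_lt_top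
  have hIp : IntegrableOn (fun x => |u x| ^ p) Ω volume := (hint p hp0).integrableOn
  have hIps : IntegrableOn (fun x => |u x| ^ pstar) Ω volume := (hint pstar hps0).integrableOn
  have hImix : IntegrableOn
      (fun x => (a / p) * |u x| ^ p - (1 / pstar) * |u x| ^ pstar) Ω volume :=
    (hIp.const_mul _).sub (hIps.const_mul _)
  have hIc : IntegrableOn (fun _ : EuclideanSpace ℝ (Fin N) => a ^ ((N:ℝ)/p) / N) Ω volume := by
    exact integrableOn_const hμ.ne
  -- integral inequality
  have hmono : ∫ x in Ω, ((a / p) * |u x| ^ p - (1 / pstar) * |u x| ^ pstar) ≤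
      ∫ _x in Ω, a ^ ((N:ℝ)/p) / N :=
    setIntegral_mono_on hImix hIc hΩo.measurableSet (fun x _ => key _ (abs_nonneg _))
  rw [setIntegral_const] at hmono
  have hsplit : ∫ x in Ω, ((a / p) * |u x| ^ p - (1 / pstar) * |u x| ^ pstar) =
      (a / p) * funLq Ω p u - (1 / pstar) * funLq Ω pstar u := by
    rw [integral_sub (hIp.const_mul _) (hIps.const_mul _), integral_const_mul,
      integral_const_mul]
    rfl
  rw [hsplit] at hmono
  -- combine
  have hgrad' : (1 / p) * gradLp Ω p u ≤ (1 / p) * (Λ * funLq Ω p u) :=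
    mul_le_mul_of_nonneg_left hgrad (by positivity)
  have hsmul : volume.real Ω • (a ^ ((N:ℝ)/p) / N) =
      (volume Ω).toReal / N * a ^ ((N:ℝ)/p) := by
    rw [smul_eq_mul, measureReal_def]; ring
  rw [hsmul] at hmono
  have hring : (1 / p) * (Λ * funLq Ω p u) - (lam / p) * funLq Ω p u =
      (a / p) * funLq Ω p u := by rw [ha_def]; ring
  unfold Phi
  linarith
end
end

section
/- Let $S$ be the Sobolev constant of $\Omega$ and assume $S > 0$. Let $\Lambda > 0$ and suppose $\lambda \in \mathbb{R}$ satisfies $\Lambda - \dfrac{S}{|\Omega|^{p/N}} < \lambda < \Lambda$. Then every $u \in C_c^\infty(\Omega)$ satisfying $\|\nabla u\|_p^p \le \Lambda \, \|u\|_p^p$ obeys the strict bound $\Phi_\lambda(u) < \dfrac{S^{N/p}}{N}$. -/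
open MeasureTheory

noncomputable section

/-- if `Λ - S/|Ω|^{p/N} < λ < Λ` then `Φ_λ(u) < S^{N/p}/N` on the cone
`‖∇u‖_p^p ≤ Λ ‖u‖_p^p`. -/
theorem statement_7 (N : ℕ) (hN : 2 ≤ N) (Ω : Set (EuclideanSpace ℝ (Fin N)))
    (hΩo : IsOpen Ω) (hΩne : Ω.Nonempty) (hΩb : Bornology.IsBounded Ω)
    (p : ℝ) (hp1 : 1 < p) (hpN : p < N)
    (pstar : ℝ) (hps : pstar = N * p / (N - p))
    (S : ℝ) (hS : S = sobolevS Ω p pstar) (hSpos : 0 < S)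
    (Λ lam : ℝ) (hΛ : 0 < Λ)
    (hlow : Λ - S / (volume Ω).toReal ^ (p / N) < lam) (hhigh : lam < Λ) :
    ∀ u : EuclideanSpace ℝ (Fin N) → ℝ, TestFun Ω u →
      gradLp Ω p u ≤ Λ * funLq Ω p u →
      Phi Ω p pstar lam u < S ^ ((N : ℝ) / p) / N := by
  intro u hu hcone
  have hp0 : (0:ℝ) < p := lt_trans one_pos hp1
  have hN0 : (0:ℝ) < (N:ℝ) := lt_trans hp0 hpN
  have hNp : (0:ℝ) < (N:ℝ) - p := by linarith
  have hps0 : 0 < pstar := by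
    rw [hps]; positivity
  have hpps : p < pstar := by
    rw [hps, lt_div_iff₀ hNp]
    nlinarith
  set V : ℝ := (volume Ω).toReal with hVdef
  have hVpos : 0 < V := by
    refine ENNReal.toReal_pos (ne_of_gt ?_) (ne_of_lt hΩb.measure_lt_top)
    exact hΩo.measure_pos volume hΩne
  set B : ℝ := Λ - lam with hBdef
  have hB : 0 < B := by simp [hBdef]; linarith
  -- conjugate exponents
  have conj : Real.HolderConjugate (pstar / p) ((N:ℝ) / p) := by
    rw [Real.holderConjugate_iff]
    constructor
    · rw [lt_div_iff₀ hp0]; linarith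
    · rw [hps]
      field_simp
      ring
  -- pointwise Young inequality
  have young : ∀ x : EuclideanSpace ℝ (Fin N),
      (B / p) * |u x| ^ p ≤ (1 / pstar) * |u x| ^ pstar + B ^ ((N:ℝ) / p) / N := by
    intro x
    have hY := Real.young_inequality_of_nonneg
      (Real.rpow_nonneg (abs_nonneg (u x)) p) hB.le conj
    have h1 : (|u x| ^ p) ^ (pstar / p) = |u x| ^ pstar := by
      rw [← Real.rpow_mul (abs_nonneg _)]
      congr 1
      field_simp
    rw [h1] at hY
    have h2 : |u x| ^ pstar / (pstar / p) = (|u x| ^ pstar) * p / pstar := by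
      rw [div_div_eq_mul_div]
    have h3 : B ^ ((N:ℝ)/p) / ((N:ℝ) / p) = B ^ ((N:ℝ)/p) * p / (N:ℝ) := by
      rw [div_div_eq_mul_div]
    rw [h2, h3] at hY
    rw [div_mul_eq_mul_div, div_le_iff₀ hp0]
    calc B * |u x| ^ p = |u x| ^ p * B := mul_comm _ _
      _ ≤ |u x| ^ pstar * p / pstar + B ^ ((N:ℝ)/p) * p / N := hY
      _ = (1 / pstar * |u x| ^ pstar + B ^ ((N:ℝ)/p) / N) * p := by ring
  -- integrability
  have hcont : Continuous u := hu.1.continuous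
  have intq : ∀ q : ℝ, 0 < q → IntegrableOn (fun x => |u x| ^ q) Ω volume := by
    intro q hq
    have hc : Continuous fun x => |u x| ^ q :=
      (hcont.abs).rpow_const (fun x => Or.inr hq.le)
    have hcs : HasCompactSupport fun x => |u x| ^ q := by
      apply hu.2.1.comp_left (g := fun t : ℝ => |t| ^ q)
      simp [Real.zero_rpow hq.ne']
    exact (hc.integrable_of_hasCompactSupport hcs).integrableOn
  have hip := intq p hp0
  have hips := intq pstar hps0
  have hconst : IntegrableOn (fun _ : EuclideanSpace ℝ (Fin N) => B ^ ((N:ℝ)/p) / N)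
      Ω volume := integrableOn_const hΩb.measure_lt_top.ne
  have key : ∫ x in Ω, (B / p) * |u x| ^ p ∂volume ≤
      ∫ x in Ω, ((1 / pstar) * |u x| ^ pstar + B ^ ((N:ℝ)/p) / N) ∂volume := by
    refine integral_mono (hip.const_mul _) ((hips.const_mul _).add hconst) ?_
    exact fun x => young x
  have hLHS : ∫ x in Ω, (B / p) * |u x| ^ p ∂volume = (B / p) * funLq Ω p u := by
    rw [integral_const_mul]; rfl
  have hRHS : ∫ x in Ω, ((1 / pstar) * |u x| ^ pstar + B ^ ((N:ℝ)/p) / N) ∂volume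
      = (1 / pstar) * funLq Ω pstar u + (B ^ ((N:ℝ)/p) / N) * V := by
    rw [integral_add (hips.const_mul _) hconst, integral_const_mul, setIntegral_const]
    simp [funLq, smul_eq_mul, mul_comm, hVdef, Measure.real]
  rw [hLHS, hRHS] at key
  -- energy bound
  have hPhi : Phi Ω p pstar lam u ≤
      (B / p) * funLq Ω p u - (1 / pstar) * funLq Ω pstar u := by
    simp only [Phi]
    have h4 : (1 / p) * gradLp Ω p u ≤ (1 / p) * (Λ * funLq Ω p u) :=
      mul_le_mul_of_nonneg_left hcone (by positivity)
    have h5 : (1 / p) * (Λ * funLq Ω p u) - (lam / p) * funLq Ω p u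
        = (B / p) * funLq Ω p u := by
      rw [hBdef]; ring
    linarith
  -- final strict inequality
  have hBV : B * V ^ (p / (N:ℝ)) < S := by
    rw [← lt_div_iff₀ (Real.rpow_pos_of_pos hVpos _)]
    rw [hBdef]
    linarith
  have hone : (p / (N:ℝ)) * ((N:ℝ) / p) = 1 := by field_simp
  have hfin : B ^ ((N:ℝ)/p) * V < S ^ ((N:ℝ)/p) := by
    have h6 := Real.rpow_lt_rpow (by positivity) hBV (div_pos hN0 hp0)
    rwa [Real.mul_rpow hB.le (Real.rpow_nonneg hVpos.le _), ← Real.rpow_mul hVpos.le,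
      hone, Real.rpow_one] at h6
  calc Phi Ω p pstar lam u
      ≤ (B / p) * funLq Ω p u - (1 / pstar) * funLq Ω pstar u := hPhi
    _ ≤ (B ^ ((N:ℝ)/p) / N) * V := by linarith
    _ = (B ^ ((N:ℝ)/p) * V) / N := by ring
    _ < S ^ ((N:ℝ)/p) / N := (div_lt_div_iff_of_pos_right hN0).2 hfin
end
end
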